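/- arXiv:2312.11403 — 2 statements merged into one kernel-verified Lean document; each statement's English description precedes it below -/
import Mathlib

section
/- Suppose an LTL formula of the form φ = z₁ ∨ z₂ ∨ ⋯ ∨ zₘ, where z_k ∈ {x_k, x̄_k} for every 1 ≤ k ≤ m, separates 𝒫 and 𝒩. Then the valuation v_φ : X → {⊤,⊥} defined by v_φ(x_k) := ⊤ if z_k = x_k and v_φ(x_k) := ⊥ if z_k = x̄_k satisfies the 3-CNF formula Φ. -/
namespace Temporal

/-- LTL formulas over a set of atomic propositions `P`. -/
inductive LTL (P : Type) : Type where
  | atom : P → LTL P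
  | lnot : LTL P → LTL P
  | land : LTL P → LTL P → LTL P
  | lor : LTL P → LTL P → LTL P
  | limp : LTL P → LTL P → LTL P
  | liff : LTL P → LTL P → LTL P
  | next : LTL P → LTL P
  | fut : LTL P → LTL P
  | glob : LTL P → LTL P
  | untl : LTL P → LTL P → LTL P
  | rel : LTL P → LTL P → LTL P
  | wuntl : LTL P → LTL P → LTL P
  | mrel : LTL P → LTL P → LTL P

variable {P : Type}

/-- Suffix `w[i:]` of an infinite word. -/
def shift (w : ℕ → Set P) (i : ℕ) : ℕ → Set P := fun n => w (n + i)

/-- The constant infinite word `α^ω`. -/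
def constW (α : Set P) : ℕ → Set P := fun _ => α

/-- LTL semantics on infinite words. -/
def LTL.Sat : LTL P → (ℕ → Set P) → Prop
  | .atom p, w => p ∈ w 0
  | .lnot φ, w => ¬ φ.Sat w
  | .land φ ψ, w => φ.Sat w ∧ ψ.Sat w
  | .lor φ ψ, w => φ.Sat w ∨ ψ.Sat w
  | .limp φ ψ, w => ¬ φ.Sat w ∨ ψ.Sat w
  | .liff φ ψ, w => (φ.Sat w ∧ ψ.Sat w) ∨ (¬ φ.Sat w ∧ ¬ ψ.Sat w)
  | .next φ, w => φ.Sat (shift w 1)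
  | .fut φ, w => ∃ i, φ.Sat (shift w i)
  | .glob φ, w => ∀ i, φ.Sat (shift w i)
  | .untl φ ψ, w => ∃ i, ψ.Sat (shift w i) ∧ ∀ j < i, φ.Sat (shift w j)
  | .rel φ ψ, w => ¬ ∃ i, ¬ ψ.Sat (shift w i) ∧ ∀ j < i, ¬ φ.Sat (shift w j)
  | .wuntl φ ψ, w =>
      (∃ i, ψ.Sat (shift w i) ∧ ∀ j < i, φ.Sat (shift w j)) ∨ ∀ i, φ.Sat (shift w i)
  | .mrel φ ψ, w =>
      (¬ ∃ i, ¬ ψ.Sat (shift w i) ∧ ∀ j < i, ¬ φ.Sat (shift w j)) ∧ ∃ i, φ.Sat (shift w i)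

/-- The set of subformulas of an LTL formula. -/
def LTL.SubF : LTL P → Set (LTL P)
  | .atom p => {.atom p}
  | .lnot φ => insert (.lnot φ) φ.SubF
  | .land φ ψ => insert (.land φ ψ) (φ.SubF ∪ ψ.SubF)
  | .lor φ ψ => insert (.lor φ ψ) (φ.SubF ∪ ψ.SubF)
  | .limp φ ψ => insert (.limp φ ψ) (φ.SubF ∪ ψ.SubF)
  | .liff φ ψ => insert (.liff φ ψ) (φ.SubF ∪ ψ.SubF)
  | .next φ => insert (.next φ) φ.SubF
  | .fut φ => insert (.fut φ) φ.SubF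
  | .glob φ => insert (.glob φ) φ.SubF
  | .untl φ ψ => insert (.untl φ ψ) (φ.SubF ∪ ψ.SubF)
  | .rel φ ψ => insert (.rel φ ψ) (φ.SubF ∪ ψ.SubF)
  | .wuntl φ ψ => insert (.wuntl φ ψ) (φ.SubF ∪ ψ.SubF)
  | .mrel φ ψ => insert (.mrel φ ψ) (φ.SubF ∪ ψ.SubF)

/-- The size of an LTL formula: its number of (distinct) subformulas. -/
noncomputable def LTL.Sz (φ : LTL P) : ℕ := φ.SubF.ncard

/-- The set of atomic propositions occurring in a formula. -/
def LTL.props (φ : LTL P) : Set P := {p : P | LTL.atom p ∈ φ.SubF}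

/-- A formula is temporal-free if no temporal operator occurs in it. -/
inductive LTL.TemporalFree : LTL P → Prop
  | atom (p : P) : TemporalFree (.atom p)
  | lnot {φ : LTL P} : TemporalFree φ → TemporalFree (.lnot φ)
  | land {φ ψ : LTL P} : TemporalFree φ → TemporalFree ψ → TemporalFree (.land φ ψ)
  | lor {φ ψ : LTL P} : TemporalFree φ → TemporalFree ψ → TemporalFree (.lor φ ψ)
  | limp {φ ψ : LTL P} : TemporalFree φ → TemporalFree ψ → TemporalFree (.limp φ ψ)
  | liff {φ ψ : LTL P} : TemporalFree φ → TemporalFree ψ → TemporalFree (.liff φ ψ)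

/-- Concise formulas: atoms, and binary combinations of concise formulas over
disjoint sets of propositions. -/
inductive LTL.Concise : LTL P → Prop
  | atom (p : P) : Concise (.atom p)
  | land {φ ψ : LTL P} : Concise φ → Concise ψ → φ.props ∩ ψ.props = ∅ → Concise (.land φ ψ)
  | lor {φ ψ : LTL P} : Concise φ → Concise ψ → φ.props ∩ ψ.props = ∅ → Concise (.lor φ ψ)
  | limp {φ ψ : LTL P} : Concise φ → Concise ψ → φ.props ∩ ψ.props = ∅ → Concise (.limp φ ψ)
  | liff {φ ψ : LTL P} : Concise φ → Concise ψ → φ.props ∩ ψ.props = ∅ → Concise (.liff φ ψ)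
  | untl {φ ψ : LTL P} : Concise φ → Concise ψ → φ.props ∩ ψ.props = ∅ → Concise (.untl φ ψ)
  | rel {φ ψ : LTL P} : Concise φ → Concise ψ → φ.props ∩ ψ.props = ∅ → Concise (.rel φ ψ)
  | wuntl {φ ψ : LTL P} : Concise φ → Concise ψ → φ.props ∩ ψ.props = ∅ → Concise (.wuntl φ ψ)
  | mrel {φ ψ : LTL P} : Concise φ → Concise ψ → φ.props ∩ ψ.props = ∅ → Concise (.mrel φ ψ)

/-- Formulas in which the only binary operator occurring is `∨`. -/
inductive LTL.OnlyOrBin : LTL P → Prop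
  | atom (p : P) : OnlyOrBin (.atom p)
  | lnot {φ : LTL P} : OnlyOrBin φ → OnlyOrBin (.lnot φ)
  | lor {φ ψ : LTL P} : OnlyOrBin φ → OnlyOrBin ψ → OnlyOrBin (.lor φ ψ)
  | next {φ : LTL P} : OnlyOrBin φ → OnlyOrBin (.next φ)
  | fut {φ : LTL P} : OnlyOrBin φ → OnlyOrBin (.fut φ)
  | glob {φ : LTL P} : OnlyOrBin φ → OnlyOrBin (.glob φ)

/-- Formulas that are disjunctions of atomic propositions, built using only `∨`. -/
inductive LTL.OrOfAtoms : LTL P → Prop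
  | atom (p : P) : OrOfAtoms (.atom p)
  | lor {φ ψ : LTL P} : OrOfAtoms φ → OrOfAtoms ψ → OrOfAtoms (.lor φ ψ)

/- ### The 3-SAT reduction.
Variables `x_k` are indexed by `k < m`; the atomic proposition `(k, true)`
represents `x_k` and `(k, false)` represents `x̄_k`. -/

/-- A literal: a variable index together with its polarity. -/
abbrev Lit := ℕ × Bool

/-- A 3-clause. -/
abbrev Clause3 := Lit × Lit × Lit

/-- A literal holds under a valuation. -/
def litSat (v : ℕ → Bool) (l : Lit) : Prop := v l.1 = l.2

/-- A clause holds under a valuation. -/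
def clauseSat (v : ℕ → Bool) (c : Clause3) : Prop :=
  litSat v c.1 ∨ litSat v c.2.1 ∨ litSat v c.2.2

/-- A valuation satisfies a 3-CNF formula (a list of clauses). -/
def cnfSat (v : ℕ → Bool) (Φ : List Clause3) : Prop := ∀ c ∈ Φ, clauseSat v c

/-- All variables of the 3-CNF formula are among `x_0, …, x_{m-1}`. -/
def cnfVars (m : ℕ) (Φ : List Clause3) : Prop :=
  ∀ c ∈ Φ, c.1.1 < m ∧ c.2.1.1 < m ∧ c.2.2.1 < m

/-- The letter `C_i = {l̃₁, l̃₂, l̃₃}` associated with a clause. -/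
def clauseSet (c : Clause3) : Set Lit := {c.1, c.2.1, c.2.2}

/-- The pair `X_k = {x_k, x̄_k}` of propositions associated with variable `x_k`. -/
def rho (k : ℕ) : Set Lit := {(k, true), (k, false)}

/-- The set `𝒫` of positive words of the reduction. -/
def Pos (m : ℕ) (Φ : List Clause3) : Set (ℕ → Set Lit) :=
  {w | (∃ c ∈ Φ, w = constW (clauseSet c)) ∨ ∃ k < m, w = constW (rho k)}

/-- The negative word `η = ∅^ω`. -/
def negWord : ℕ → Set Lit := constW ∅

/-- `φ` separates `𝒫` and `𝒩 = {η}`. -/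
def Separates (m : ℕ) (Φ : List Clause3) (φ : LTL Lit) : Prop :=
  (∀ w ∈ Pos m Φ, φ.Sat w) ∧ ¬ φ.Sat negWord

/-- All propositions of `φ` are among `{x_k, x̄_k : k < m}`. -/
def propsInRange (m : ℕ) (φ : LTL Lit) : Prop := ∀ p ∈ φ.props, p.1 < m

/-- The disjunction `x_0^v ∨ x_1^v ∨ ⋯ ∨ x_{m-1}^v` (for `m ≥ 1`),
where `x_k^v` is the atom `(k, v k)`. -/
def vDisj (v : ℕ → Bool) : ℕ → LTL Lit
  | 0 => .atom (0, v 0)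
  | 1 => .atom (0, v 0)
  | (k + 2) => .lor (vDisj v (k + 1)) (.atom (k + 1, v (k + 1)))

/-- A formula is disjunctive on a set `I` of variable indices. -/
def DisjunctiveOn (I : Set ℕ) (φ : LTL Lit) : Prop :=
  φ.TemporalFree ∧ φ.Concise ∧ φ.OnlyOrBin ∧
    φ.props.ncard = I.ncard ∧ ∀ k ∈ I, (φ.props ∩ rho k).ncard = 1

/-- A formula is `I`-concise for a set `I` of variable indices. -/
def IConciseOn (I : Set ℕ) (φ : LTL Lit) : Prop :=
  φ.Concise ∧ φ.props.ncard = I.ncard ∧ ∀ k ∈ I, (φ.props ∩ rho k).ncard = 1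

/- ### CTL -/

/-- CTL (state) formulas over `P`; a quantified temporal subformula, e.g. `E(φ U ψ)`,
is a single constructor (`Bool` is the path quantifier: `true` = E, `false` = A). -/
inductive CTL (P : Type) : Type where
  | atom : P → CTL P
  | lnot : CTL P → CTL P
  | land : CTL P → CTL P → CTL P
  | lor : CTL P → CTL P → CTL P
  | limp : CTL P → CTL P → CTL P
  | liff : CTL P → CTL P → CTL P
  | qnext : Bool → CTL P → CTL P
  | qfut : Bool → CTL P → CTL P
  | qglob : Bool → CTL P → CTL P
  | quntl : Bool → CTL P → CTL P → CTL P
  | qrel : Bool → CTL P → CTL P → CTL P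
  | qwuntl : Bool → CTL P → CTL P → CTL P
  | qmrel : Bool → CTL P → CTL P → CTL P

/-- A Kripke structure over `P`. -/
structure Kripke (P : Type) where
  S : Type
  I : Set S
  R : S → S → Prop
  total : ∀ s : S, ∃ t : S, R s t
  L : S → Set P

/-- An infinite path of a Kripke structure. -/
def Kripke.IsPath (M : Kripke P) (π : ℕ → M.S) : Prop := ∀ i, M.R (π i) (π (i + 1))

/-- Path quantification: `q = true` is `E` (some path from `s`), `q = false` is `A`. -/
def Kripke.Q (M : Kripke P) (q : Bool) (s : M.S) (pred : (ℕ → M.S) → Prop) : Prop :=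
  if q then ∃ π : ℕ → M.S, M.IsPath π ∧ π 0 = s ∧ pred π
  else ∀ π : ℕ → M.S, M.IsPath π → π 0 = s → pred π

/-- CTL semantics at a state of a Kripke structure. -/
def CTL.Sat (M : Kripke P) : CTL P → M.S → Prop
  | .atom p, s => p ∈ M.L s
  | .lnot φ, s => ¬ φ.Sat M s
  | .land φ ψ, s => φ.Sat M s ∧ ψ.Sat M s
  | .lor φ ψ, s => φ.Sat M s ∨ ψ.Sat M s
  | .limp φ ψ, s => ¬ φ.Sat M s ∨ ψ.Sat M s
  | .liff φ ψ, s => (φ.Sat M s ∧ ψ.Sat M s) ∨ (¬ φ.Sat M s ∧ ¬ ψ.Sat M s)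
  | .qnext q φ, s => M.Q q s fun π => φ.Sat M (π 1)
  | .qfut q φ, s => M.Q q s fun π => ∃ i, φ.Sat M (π i)
  | .qglob q φ, s => M.Q q s fun π => ∀ i, φ.Sat M (π i)
  | .quntl q φ ψ, s => M.Q q s fun π => ∃ i, ψ.Sat M (π i) ∧ ∀ j < i, φ.Sat M (π j)
  | .qrel q φ ψ, s => M.Q q s fun π => ¬ ∃ i, ¬ ψ.Sat M (π i) ∧ ∀ j < i, ¬ φ.Sat M (π j)
  | .qwuntl q φ ψ, s => M.Q q s fun π =>
      (∃ i, ψ.Sat M (π i) ∧ ∀ j < i, φ.Sat M (π j)) ∨ ∀ i, φ.Sat M (π i)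
  | .qmrel q φ ψ, s => M.Q q s fun π =>
      (¬ ∃ i, ¬ ψ.Sat M (π i) ∧ ∀ j < i, ¬ φ.Sat M (π j)) ∧ ∃ i, φ.Sat M (π i)

/-- `M ⊨ φ`: the formula holds at every initial state. -/
def Kripke.Models (M : Kripke P) (φ : CTL P) : Prop := ∀ s ∈ M.I, φ.Sat M s

/-- The set of subformulas of a CTL formula (a quantified temporal subformula counts
as a single subformula together with the subformulas of its arguments). -/
def CTL.SubF : CTL P → Set (CTL P)
  | .atom p => {.atom p}
  | .lnot φ => insert (.lnot φ) φ.SubF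
  | .land φ ψ => insert (.land φ ψ) (φ.SubF ∪ ψ.SubF)
  | .lor φ ψ => insert (.lor φ ψ) (φ.SubF ∪ ψ.SubF)
  | .limp φ ψ => insert (.limp φ ψ) (φ.SubF ∪ ψ.SubF)
  | .liff φ ψ => insert (.liff φ ψ) (φ.SubF ∪ ψ.SubF)
  | .qnext q φ => insert (.qnext q φ) φ.SubF
  | .qfut q φ => insert (.qfut q φ) φ.SubF
  | .qglob q φ => insert (.qglob q φ) φ.SubF
  | .quntl q φ ψ => insert (.quntl q φ ψ) (φ.SubF ∪ ψ.SubF)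
  | .qrel q φ ψ => insert (.qrel q φ ψ) (φ.SubF ∪ ψ.SubF)
  | .qwuntl q φ ψ => insert (.qwuntl q φ ψ) (φ.SubF ∪ ψ.SubF)
  | .qmrel q φ ψ => insert (.qmrel q φ ψ) (φ.SubF ∪ ψ.SubF)

/-- The size of a CTL formula: its number of (distinct) subformulas. -/
noncomputable def CTL.Sz (φ : CTL P) : ℕ := φ.SubF.ncard

/-- `f_{CTL→LTL}`: erase all path quantifiers. -/
def CTL.toLTL : CTL P → LTL P
  | .atom p => .atom p
  | .lnot φ => .lnot φ.toLTL
  | .land φ ψ => .land φ.toLTL ψ.toLTL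
  | .lor φ ψ => .lor φ.toLTL ψ.toLTL
  | .limp φ ψ => .limp φ.toLTL ψ.toLTL
  | .liff φ ψ => .liff φ.toLTL ψ.toLTL
  | .qnext _ φ => .next φ.toLTL
  | .qfut _ φ => .fut φ.toLTL
  | .qglob _ φ => .glob φ.toLTL
  | .quntl _ φ ψ => .untl φ.toLTL ψ.toLTL
  | .qrel _ φ ψ => .rel φ.toLTL ψ.toLTL
  | .qwuntl _ φ ψ => .wuntl φ.toLTL ψ.toLTL
  | .qmrel _ φ ψ => .mrel φ.toLTL ψ.toLTL

/-- `f_{LTL→CTL}`: insert the quantifier `E` before every temporal operator. -/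
def LTL.toCTL : LTL P → CTL P
  | .atom p => .atom p
  | .lnot φ => .lnot φ.toCTL
  | .land φ ψ => .land φ.toCTL ψ.toCTL
  | .lor φ ψ => .lor φ.toCTL ψ.toCTL
  | .limp φ ψ => .limp φ.toCTL ψ.toCTL
  | .liff φ ψ => .liff φ.toCTL ψ.toCTL
  | .next φ => .qnext true φ.toCTL
  | .fut φ => .qfut true φ.toCTL
  | .glob φ => .qglob true φ.toCTL
  | .untl φ ψ => .quntl true φ.toCTL ψ.toCTL
  | .rel φ ψ => .qrel true φ.toCTL ψ.toCTL
  | .wuntl φ ψ => .qwuntl true φ.toCTL ψ.toCTL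
  | .mrel φ ψ => .qmrel true φ.toCTL ψ.toCTL

/-- The one-state Kripke structure `M_{α^ω}`. -/
def singleKripke (α : Set P) : Kripke P where
  S := Unit
  I := Set.univ
  R := fun _ _ => True
  total := fun s => ⟨s, trivial⟩
  L := fun _ => α

theorem vDisj_sat (z : ℕ → Bool) (w : ℕ → Set Lit) :
    ∀ n, (vDisj z n).Sat w → ∃ k ≤ n, (k, z k) ∈ w 0 := by
  intro n
  induction n with
  | zero => intro h; exact ⟨0, le_refl 0, h⟩
  | succ n ih =>
    cases n with
    | zero => intro h; exact ⟨0, Nat.zero_le 1, h⟩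
    | succ n =>
      intro h
      cases h with
      | inl h =>
        obtain ⟨k, hk, hm⟩ := ih h
        exact ⟨k, Nat.le_succ_of_le hk, hm⟩
      | inr h => exact ⟨n + 1, Nat.le_succ _, h⟩

/-- if a disjunction `z_1 ∨ ⋯ ∨ z_m` with `z_k ∈ {x_k, x̄_k}` separates
`𝒫` and `𝒩`, then the corresponding valuation (here, the polarity function `z` itself)
satisfies `Φ`. -/
theorem simple_case (m : ℕ) (hm : 0 < m) (Φ : List Clause3) (hvars : cnfVars m Φ)
    (z : ℕ → Bool) (hsep : Separates m Φ (vDisj z m)) :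
    cnfSat z Φ := by
  intro c hc
  have hw : (vDisj z m).Sat (constW (clauseSet c)) :=
    hsep.1 _ (Or.inl ⟨c, hc, rfl⟩)
  obtain ⟨k, _, hk⟩ := vDisj_sat z _ m hw
  rcases hk with h | h | h
  · left
    have h1 : k = c.1.1 := congrArg Prod.fst h
    have h2 : z k = c.1.2 := congrArg Prod.snd h
    show litSat z _
    unfold litSat
    rw [← h1]; exact h2
  · right; left
    have h1 : k = c.2.1.1 := congrArg Prod.fst h
    have h2 : z k = c.2.1.2 := congrArg Prod.snd h
    show litSat z _
    unfold litSat
    rw [← h1]; exact h2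
  · right; right
    have h1 : k = c.2.2.1 := congrArg Prod.fst h
    have h2 : z k = c.2.2.2 := congrArg Prod.snd h
    show litSat z _
    unfold litSat
    rw [← h1]; exact h2

end Temporal
end

section
/- For every LTL formula φ and every Y ⊆ Prop: if Y ⊊ Prop(φ) (strict inclusion), then there are at least 2|Y| distinct subformulas ψ ∈ SubF(φ) in which some proposition of Y occurs, i.e., |{ψ ∈ SubF(φ) : Y ∩ Prop(ψ) ≠ ∅}| ≥ 2|Y|. -/
namespace Temporal

variable {P : Type}

/-!
Induct on `φ`, proving for every `Y ⊆ Prop(φ)` the two bounds `2|Y| ≤ t + 1` and, when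
`Y ≠ Prop(φ)`, `2|Y| ≤ t`, where `t` is the number of subformulas touching `Y`. At a binary
node over `φ₁, φ₂` split `Y` into `Y₁ = Y ∩ Prop(φ₁)` and `Y₂ = Y \ Prop(φ₁) ⊆ Prop(φ₂)`: the
subformulas of `φ₁` touching `Y₁`, those of `φ₂` touching `Y₂` (they avoid `Prop(φ₁)`) and the
node itself are pairwise distinct, so `t ≥ t₁ + t₂ + 1`. If `Y` misses a proposition of the node,
then so does `Y₁` for `φ₁` or `Y₂` for `φ₂`, which supplies the missing unit.
-/

namespace LTL

theorem mem_subF_self (φ : LTL P) : φ ∈ φ.SubF := by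
  cases φ <;> simp [SubF]

theorem subF_finite (φ : LTL P) : φ.SubF.Finite := by
  induction φ <;> simp_all [SubF]

theorem props_finite (φ : LTL P) : φ.props.Finite :=
  φ.subF_finite.preimage fun _ _ _ _ h => atom.inj h

theorem subF_subset_of_mem {φ ψ : LTL P} (h : ψ ∈ φ.SubF) : ψ.SubF ⊆ φ.SubF := by
  induction φ with
  | atom p => rw [Set.mem_singleton_iff.mp h]
  | lnot χ ih | next χ ih | fut χ ih | glob χ ih =>
    obtain rfl | h := h
    · rfl
    · exact (ih h).trans (Set.subset_insert _ _)
  | land χ₁ χ₂ ih₁ ih₂ | lor χ₁ χ₂ ih₁ ih₂ | limp χ₁ χ₂ ih₁ ih₂ | liff χ₁ χ₂ ih₁ ih₂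
  | untl χ₁ χ₂ ih₁ ih₂ | rel χ₁ χ₂ ih₁ ih₂ | wuntl χ₁ χ₂ ih₁ ih₂ | mrel χ₁ χ₂ ih₁ ih₂ =>
    obtain rfl | h | h := h
    · rfl
    · exact (ih₁ h).trans (Set.subset_union_left.trans (Set.subset_insert _ _))
    · exact (ih₂ h).trans (Set.subset_union_right.trans (Set.subset_insert _ _))

theorem sizeOf_le_of_mem_subF {φ ψ : LTL P} (h : ψ ∈ φ.SubF) : sizeOf ψ ≤ sizeOf φ := by
  induction φ with
  | atom p => rw [Set.mem_singleton_iff.mp h]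
  | lnot χ ih | next χ ih | fut χ ih | glob χ ih =>
    obtain rfl | h := h
    · rfl
    · grind
  | land χ₁ χ₂ ih₁ ih₂ | lor χ₁ χ₂ ih₁ ih₂ | limp χ₁ χ₂ ih₁ ih₂ | liff χ₁ χ₂ ih₁ ih₂
  | untl χ₁ χ₂ ih₁ ih₂ | rel χ₁ χ₂ ih₁ ih₂ | wuntl χ₁ χ₂ ih₁ ih₂ | mrel χ₁ χ₂ ih₁ ih₂ =>
    obtain rfl | h | h := h
    · rfl
    · grind
    · grind

theorem props_subset_of_mem_subF {φ ψ : LTL P} (h : ψ ∈ φ.SubF) : ψ.props ⊆ φ.props :=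
  fun _ hp => subF_subset_of_mem h hp

theorem not_mem_subF_of_sizeOf_lt {φ ψ : LTL P} (h : sizeOf φ < sizeOf ψ) : ψ ∉ φ.SubF :=
  fun hψ => (sizeOf_le_of_mem_subF hψ).not_gt h

theorem props_eq_of_subF_eq_insert {φ : LTL P} {S : Set (LTL P)} (hS : φ.SubF = insert φ S)
    (hφ : ∀ p, φ ≠ atom p) : φ.props = {p | atom p ∈ S} := by
  ext p
  change atom p ∈ φ.SubF ↔ atom p ∈ S
  rw [hS, Set.mem_insert_iff, or_iff_right (hφ p).symm]

def touching (φ : LTL P) (Y : Set P) : Set (LTL P) := {ψ ∈ φ.SubF | (Y ∩ ψ.props).Nonempty}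

theorem touching_finite (φ : LTL P) (Y : Set P) : (φ.touching Y).Finite :=
  φ.subF_finite.subset fun _ hψ => hψ.1

theorem ncard_touching_le {φ χ : LTL P} (hS : φ.SubF ⊆ χ.SubF) (Y : Set P) :
    (φ.touching Y).ncard ≤ (χ.touching Y).ncard :=
  Set.ncard_le_ncard (fun _ hψ => ⟨hS hψ.1, hψ.2⟩) (χ.touching_finite Y)

theorem ncard_touching_add_ncard_touching_lt {top χ₁ χ₂ : LTL P}
    (hS : top.SubF = insert top (χ₁.SubF ∪ χ₂.SubF)) (h₁ : top ∉ χ₁.SubF) (h₂ : top ∉ χ₂.SubF)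
    {Y : Set P} (hY : (Y ∩ top.props).Nonempty) :
    (χ₁.touching (Y ∩ χ₁.props)).ncard + (χ₂.touching (Y \ χ₁.props)).ncard <
      (top.touching Y).ncard := by
  set T₁ := χ₁.touching (Y ∩ χ₁.props)
  set T₂ := χ₂.touching (Y \ χ₁.props)
  have hdisj : Disjoint T₁ T₂ := by
    rw [Set.disjoint_left]
    rintro ψ ⟨hψ, -⟩ ⟨-, q, hqY, hqψ⟩
    exact hqY.2 (props_subset_of_mem_subF hψ hqψ)
  have htop : top ∉ T₁ ∪ T₂ := by
    rintro (⟨h, -⟩ | ⟨h, -⟩)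
    exacts [h₁ h, h₂ h]
  have hS₁ : χ₁.SubF ⊆ top.SubF := hS ▸ Set.subset_union_left.trans (Set.subset_insert _ _)
  have hS₂ : χ₂.SubF ⊆ top.SubF := hS ▸ Set.subset_union_right.trans (Set.subset_insert _ _)
  have hsub : insert top (T₁ ∪ T₂) ⊆ top.touching Y := by
    rintro ψ (rfl | ⟨hψ, hψY⟩ | ⟨hψ, hψY⟩)
    · exact ⟨ψ.mem_subF_self, hY⟩
    · exact ⟨hS₁ hψ, hψY.mono (Set.inter_subset_inter_left _ Set.inter_subset_left)⟩
    · exact ⟨hS₂ hψ, hψY.mono (Set.inter_subset_inter_left _ Set.sdiff_subset)⟩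
  have hfin₁ : T₁.Finite := χ₁.touching_finite _
  have hfin₂ : T₂.Finite := χ₂.touching_finite _
  calc T₁.ncard + T₂.ncard < (insert top (T₁ ∪ T₂)).ncard := by
        rw [Set.ncard_insert_of_notMem htop (hfin₁.union hfin₂),
          Set.ncard_union_eq hdisj hfin₁ hfin₂]
        omega
    _ ≤ (top.touching Y).ncard := Set.ncard_le_ncard hsub (top.touching_finite Y)

def TouchingBound (φ : LTL P) (Y : Set P) : Prop :=
  2 * Y.ncard ≤ (φ.touching Y).ncard + 1 ∧ (Y ≠ φ.props → 2 * Y.ncard ≤ (φ.touching Y).ncard)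

theorem touchingBound_atom (p : P) {Y : Set P} (hY : Y ⊆ (atom p).props) :
    (atom p).TouchingBound Y := by
  have hprops : (atom p).props = {p} := by ext; simp [props, SubF]
  rw [hprops] at hY
  unfold TouchingBound
  rw [hprops]
  obtain rfl | rfl := Set.subset_singleton_iff_eq.mp hY
  · simp
  · have : 0 < ((atom p).touching {p}).ncard :=
      (Set.ncard_pos ((atom p).touching_finite _)).mpr
        ⟨atom p, (atom p).mem_subF_self, p, rfl, (atom p).mem_subF_self⟩
    refine ⟨?_, fun h => (h rfl).elim⟩
    rw [Set.ncard_singleton]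
    omega

theorem touchingBound_of_unary {top χ : LTL P} (hS : top.SubF = insert top χ.SubF)
    (htop : ∀ p, top ≠ atom p) (ih : ∀ {Y}, Y ⊆ χ.props → χ.TouchingBound Y)
    {Y : Set P} (hY : Y ⊆ top.props) : top.TouchingBound Y := by
  have hP : top.props = χ.props := props_eq_of_subF_eq_insert hS htop
  have hle := ncard_touching_le (hS ▸ Set.subset_insert top χ.SubF) Y
  rw [hP] at hY
  obtain ⟨hA, hB⟩ := ih hY
  exact ⟨by omega, fun hne => by have := hB (hP ▸ hne); omega⟩

theorem touchingBound_of_binary {top χ₁ χ₂ : LTL P}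
    (hS : top.SubF = insert top (χ₁.SubF ∪ χ₂.SubF)) (h₁ : top ∉ χ₁.SubF) (h₂ : top ∉ χ₂.SubF)
    (htop : ∀ p, top ≠ atom p)
    (ih₁ : ∀ {Y}, Y ⊆ χ₁.props → χ₁.TouchingBound Y)
    (ih₂ : ∀ {Y}, Y ⊆ χ₂.props → χ₂.TouchingBound Y)
    {Y : Set P} (hY : Y ⊆ top.props) : top.TouchingBound Y := by
  rcases Y.eq_empty_or_nonempty with rfl | ⟨y, hy⟩
  · simp [TouchingBound]
  have hP : top.props = χ₁.props ∪ χ₂.props := props_eq_of_subF_eq_insert hS htop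
  have hlt := ncard_touching_add_ncard_touching_lt hS h₁ h₂ ⟨y, hy, hY hy⟩
  have hcard := Set.ncard_inter_add_ncard_sdiff_eq_ncard Y χ₁.props (top.props_finite.subset hY)
  rw [hP] at hY
  obtain ⟨hA₁, hB₁⟩ := ih₁ (Y := Y ∩ χ₁.props) Set.inter_subset_right
  obtain ⟨hA₂, hB₂⟩ := ih₂ (Y := Y \ χ₁.props) fun q hq => (hY hq.1).resolve_left hq.2
  refine ⟨by omega, fun hne => ?_⟩
  by_cases hfull₁ : Y ∩ χ₁.props = χ₁.props
  · have hmiss₂ : Y \ χ₁.props ≠ χ₂.props := fun hfull₂ =>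
      hne (by rw [hP, ← Set.inter_union_sdiff Y χ₁.props, hfull₁, hfull₂])
    have := hB₂ hmiss₂
    omega
  · have := hB₁ hfull₁
    omega

theorem touchingBound_of_subset_props (φ : LTL P) {Y : Set P} (hY : Y ⊆ φ.props) :
    φ.TouchingBound Y := by
  induction φ generalizing Y with
  | atom p => exact touchingBound_atom p hY
  | lnot χ ih | next χ ih | fut χ ih | glob χ ih =>
    exact touchingBound_of_unary rfl nofun ih hY
  | land χ₁ χ₂ ih₁ ih₂ | lor χ₁ χ₂ ih₁ ih₂ | limp χ₁ χ₂ ih₁ ih₂ | liff χ₁ χ₂ ih₁ ih₂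
  | untl χ₁ χ₂ ih₁ ih₂ | rel χ₁ χ₂ ih₁ ih₂ | wuntl χ₁ χ₂ ih₁ ih₂ | mrel χ₁ χ₂ ih₁ ih₂ =>
    exact touchingBound_of_binary rfl (not_mem_subF_of_sizeOf_lt (by simp +arith))
      (not_mem_subF_of_sizeOf_lt (by simp +arith)) nofun ih₁ ih₂ hY

end LTL

theorem subformulas_lower_bound_strict_general (P : Type) (φ : LTL P) (Y : Set P)
    (hsub : Y ⊂ φ.props) :
    2 * Y.ncard ≤ {ψ ∈ φ.SubF | (Y ∩ ψ.props).Nonempty}.ncard :=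
  (φ.touchingBound_of_subset_props hsub.subset).2 hsub.ne

/-- if `Y ⊊ Prop(φ)`, at least `2|Y|` subformulas of `φ` contain a
proposition of `Y`. -/
theorem subformulas_lower_bound_strict (P : Type) (φ : LTL P) (Y : Set P)
    (hY : Y.Finite) (hsub : Y ⊂ φ.props) :
    2 * Y.ncard ≤ {ψ ∈ φ.SubF | (Y ∩ ψ.props).Nonempty}.ncard :=
  subformulas_lower_bound_strict_general P φ Y hsub

end Temporal
end
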